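/- arXiv:1909.05456 — 4 statements merged into one kernel-verified Lean document; each statement's English description precedes it below -/
import Mathlib

section
/- Let Γ be a finite connected 4-valent simple graph, let G ≤ Aut(Γ) act transitively on the arcs of Γ, and let N be a normal subgroup of G that is semiregular on VΓ and such that the quotient graph Γ/N is a cycle of length r ≥ 3. Let K be the kernel of the induced action of G on the set of N-orbits on VΓ. Then for every vertex v of Γ the stabiliser K_v is an elementary abelian 2-group. -/
open SimpleGraph

noncomputable def fpr {V : Type*} (g : V → V) : ℚ :=
  (Nat.card {v : V // g v = v} : ℚ) / (Nat.card V : ℚ)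

/-- The Praeger–Xu graph `C(r,s)`. -/
def praegerXu (r s : ℕ) : SimpleGraph (ZMod r × (Fin s → ZMod 2)) :=
  SimpleGraph.fromRel (fun a b =>
    b.1 = a.1 + 1 ∧ ∀ (i : Fin s) (h : (i : ℕ) + 1 < s), b.2 i = a.2 ⟨(i : ℕ) + 1, h⟩)

/-- The Split Praeger–Xu graph `S(C(r,s))`; `1` plays the role of `+`, `0` of `−`. -/
def splitPraegerXu (r s : ℕ) : SimpleGraph ((ZMod r × (Fin s → ZMod 2)) × Fin 2) :=
  SimpleGraph.fromRel (fun a b => a.2 = 1 ∧ b.2 = 0 ∧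
    (a.1 = b.1 ∨ (b.1.1 = a.1.1 + 1 ∧
      ∀ (i : Fin s) (h : (i : ℕ) + 1 < s), b.1.2 i = a.1.2 ⟨(i : ℕ) + 1, h⟩)))

def VertexTransitive {V : Type*} (Γ : SimpleGraph V) : Prop :=
  ∀ u v : V, ∃ e : Γ ≃g Γ, e u = v

def EdgeTransitive {V : Type*} (Γ : SimpleGraph V) : Prop :=
  ∀ u v u' v' : V, Γ.Adj u v → Γ.Adj u' v' →
    ∃ e : Γ ≃g Γ, (e u = u' ∧ e v = v') ∨ (e u = v' ∧ e v = u')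

def ArcTransitive {V : Type*} (Γ : SimpleGraph V) : Prop :=
  ∀ u v u' v' : V, Γ.Adj u v → Γ.Adj u' v' → ∃ e : Γ ≃g Γ, e u = u' ∧ e v = v'

-- exceptional graphs
def Psi1 : SimpleGraph (Fin 5) := ⊤

def Psi2 : SimpleGraph (Fin 5 × Fin 2) :=
  SimpleGraph.fromRel (fun a b => a.2 ≠ b.2 ∧ a.1 ≠ b.1)

def Psi3 : SimpleGraph ({v : Fin 3 → ZMod 2 // v ≠ 0} × Fin 2) :=
  SimpleGraph.fromRel (fun a b => a.2 ≠ b.2 ∧ ∑ i, a.1.1 i * b.1.1 i ≠ 0)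

instance : Fact (Nat.Prime 3) := ⟨by norm_num⟩

def Psi4 : SimpleGraph (Projectivization (ZMod 3) (Fin 3 → ZMod 3) × Fin 2) :=
  SimpleGraph.fromRel (fun a b => a.2 ≠ b.2 ∧ ∑ i, a.1.rep i * b.1.rep i = 0)

def kneser (n k : ℕ) : SimpleGraph {s : Finset (Fin n) // s.card = k} :=
  SimpleGraph.fromRel (fun a b => Disjoint a.1 b.1)

def Psi5 : SimpleGraph {s : Finset (Fin 7) // s.card = 3} := kneser 7 3

def doubleCover {V : Type*} (G : SimpleGraph V) : SimpleGraph (V × Fin 2) :=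
  SimpleGraph.fromRel (fun a b => a.2 ≠ b.2 ∧ G.Adj a.1 b.1)

def Psi6 := doubleCover Psi5

def Lambda1 : SimpleGraph (Fin 4) := ⊤
def Lambda2 : SimpleGraph (Fin 3 ⊕ Fin 3) := completeBipartiteGraph (Fin 3) (Fin 3)
def cubeGraph : SimpleGraph (Fin 3 → ZMod 2) :=
  SimpleGraph.fromRel (fun a b => (Finset.univ.filter fun i => a i ≠ b i).card = 1)
def Lambda3 := cubeGraph
def Lambda4 : SimpleGraph {s : Finset (Fin 5) // s.card = 2} := kneser 5 2
def Lambda5 : SimpleGraph ({v : Fin 3 → ZMod 2 // v ≠ 0} × Fin 2) :=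
  SimpleGraph.fromRel (fun a b => a.2 ≠ b.2 ∧ ∑ i, a.1.1 i * b.1.1 i = 0)
def Lambda6 := doubleCover Lambda4

-- tau, rho, sigma
def tauFun (r s : ℕ) (i : ZMod r) :
    ZMod r × (Fin s → ZMod 2) → ZMod r × (Fin s → ZMod 2) :=
  fun a => (a.1, fun j => if a.1 + ((j : ℕ) : ZMod r) = i then a.2 j + 1 else a.2 j)

lemma tauFun_involutive (r s : ℕ) (i : ZMod r) : Function.Involutive (tauFun r s i) := by
  intro a
  unfold tauFun
  refine Prod.ext rfl ?_
  funext j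
  by_cases h : a.1 + ((j : ℕ) : ZMod r) = i
  · simp only [h, if_pos]
    rw [add_assoc, show (1 : ZMod 2) + 1 = 0 from rfl, add_zero]
  · simp [h]

/-- The permutation `τ_i` of the vertices of `C(r,s)`. -/
def tauPerm (r s : ℕ) (i : ZMod r) : Equiv.Perm (ZMod r × (Fin s → ZMod 2)) :=
  (tauFun_involutive r s i).toPerm

def rhoPerm (r s : ℕ) : Equiv.Perm (ZMod r × (Fin s → ZMod 2)) :=
  (Equiv.addRight (1 : ZMod r)).prodCongr (Equiv.refl _)

def sigmaFun (r s : ℕ) :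
    ZMod r × (Fin s → ZMod 2) → ZMod r × (Fin s → ZMod 2) :=
  fun a => (1 - (s : ZMod r) - a.1, fun j => a.2 j.rev)

lemma sigmaFun_involutive (r s : ℕ) : Function.Involutive (sigmaFun r s) := by
  intro a
  unfold sigmaFun
  refine Prod.ext ?_ ?_
  · simp only
    ring
  · funext j
    simp [Fin.rev_rev]

def sigmaPerm (r s : ℕ) : Equiv.Perm (ZMod r × (Fin s → ZMod 2)) :=
  (sigmaFun_involutive r s).toPerm

/-- The group `K = ⟨τ_i : i ∈ ZMod r⟩`. -/
def pxK (r s : ℕ) : Subgroup (Equiv.Perm (ZMod r × (Fin s → ZMod 2))) :=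
  Subgroup.closure (Set.range (tauPerm r s))

/-- The group `H = ⟨K, ρ, σ⟩`. -/
def pxH (r s : ℕ) : Subgroup (Equiv.Perm (ZMod r × (Fin s → ZMod 2))) :=
  Subgroup.closure (Set.range (tauPerm r s) ∪ {rhoPerm r s, sigmaPerm r s})

/-- Quotient graph of `Γ` by the orbits of a group action. -/
def quotGraph {V : Type*} (G : Type*) [Group G] [MulAction G V] (Γ : SimpleGraph V) :
    SimpleGraph (MulAction.orbitRel.Quotient G V) :=
  SimpleGraph.fromRel (fun a b => ∃ u v : V,
    (Quotient.mk (MulAction.orbitRel G V) u : MulAction.orbitRel.Quotient G V) = a ∧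
    (Quotient.mk (MulAction.orbitRel G V) v : MulAction.orbitRel.Quotient G V) = b ∧
    Γ.Adj u v)

/-!
Let `K` be the kernel of `G` on the `N`-orbits. Arc-transitivity carries any arc onto an arc
of the cycle `Γ/N`, so the neighbours of a vertex `x` lie in the two `N`-orbits adjacent to
that of `x`; an element of `G_x` mapping one to the other shows that each contains exactly two
of the four neighbours. An element of `K_x` permutes each of these pairs, so its square fixes
`Γ(x)` pointwise. If `g ∈ K` and `g²` fixes `x`, write `g • x = n • x` with `n ∈ N`: the
element `g n g⁻¹ n ∈ N` fixes `x`, so by semiregularity `g` inverts `n`, whence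
`g² = (n⁻¹ g)²` with `n⁻¹ g ∈ K_x`, and `g²` again fixes `Γ(x)`. By connectivity the square of
any `g ∈ K_v` fixes every vertex, so `g² = 1`, and a group of exponent two is abelian.
-/

open MulAction

namespace Set

lemma exists_ne_eq_pair_of_ncard_eq_two {α : Type*} {s : Set α} (hs : s.ncard = 2) {a : α}
    (ha : a ∈ s) : ∃ b, a ≠ b ∧ s = {a, b} := by
  obtain ⟨x, y, hxy, rfl⟩ := ncard_eq_two.mp hs
  rcases ha with rfl | rfl
  · exact ⟨y, hxy, rfl⟩
  · exact ⟨x, hxy.symm, pair_comm _ _⟩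

lemma MapsTo.apply_apply_eq_of_ncard_eq_two {α : Type*} {f : α → α} {s : Set α}
    (hf : MapsTo f s s) (hinj : Function.Injective f) (hs : s.ncard = 2) {a : α} (ha : a ∈ s) :
    f (f a) = a := by
  obtain ⟨b, hab, rfl⟩ := exists_ne_eq_pair_of_ncard_eq_two hs ha
  have hfa : f a = a ∨ f a = b := hf ha
  have hfb : f b = a ∨ f b = b := hf (mem_insert_of_mem a rfl)
  rcases hfa with hfa | hfa
  · rw [hfa, hfa]
  · rcases hfb with hfb | hfb
    · rw [hfa, hfb]
    · exact absurd (hinj (hfa.trans hfb.symm)) hab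

end Set

section OrbitQuotient

variable {V G : Type*} [Group G] [MulAction G V] {N : Subgroup G}

abbrev orbitClass (N : Subgroup G) (u : V) : orbitRel.Quotient N V := ⟦u⟧

lemma orbitClass_eq_iff {u w : V} : orbitClass N u = orbitClass N w ↔ u ∈ orbit N w :=
  Quotient.eq.trans orbitRel_apply

lemma Subgroup.Normal.orbitClass_smul_eq (hN : N.Normal) (g : G) {u w : V}
    (h : orbitClass N u = orbitClass N w) : orbitClass N (g • u) = orbitClass N (g • w) := by
  obtain ⟨n, rfl⟩ := orbitClass_eq_iff.mp h
  refine orbitClass_eq_iff.mpr ⟨⟨g * n * g⁻¹, hN.conj_mem n n.2 g⟩, ?_⟩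
  simp only [Subgroup.smul_def, smul_smul, inv_mul_cancel_right]

def orbitKernel (N : Subgroup G) (V : Type*) [MulAction G V] : Subgroup G where
  carrier := {g | ∀ u : V, g • u ∈ orbit N u}
  one_mem' u := by simpa only [one_smul] using mem_orbit_self u
  mul_mem' {g h} hg hh u := by
    rw [mul_smul, ← orbit_eq_iff.mpr (hh u)]
    exact hg (h • u)
  inv_mem' {g} hg u := by
    simpa only [smul_inv_smul] using mem_orbit_symm.mp (hg (g⁻¹ • u))

lemma le_orbitKernel : N ≤ orbitKernel N V :=
  fun n hn _ => ⟨⟨n, hn⟩, rfl⟩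

lemma orbitClass_smul_of_mem_orbitKernel {g : G} (hg : g ∈ orbitKernel N V) (u : V) :
    orbitClass N (g • u) = orbitClass N u :=
  orbitClass_eq_iff.mpr (hg u)

lemma exists_mem_orbitKernel_smul_eq_mul_self_eq (hN : N.Normal)
    (hsemi : ∀ n : N, (∃ v : V, n • v = v) → n = 1) {g : G} (hg : g ∈ orbitKernel N V)
    {x : V} (hx : (g * g) • x = x) :
    ∃ h ∈ orbitKernel N V, h • x = x ∧ h * h = g * g := by
  obtain ⟨⟨n, hnN⟩, hn⟩ := hg x
  replace hn : n • x = g • x := hn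
  have hcN : g * n * g⁻¹ * n ∈ N := mul_mem (hN.conj_mem n hnN g) hnN
  have hc : g * n * g⁻¹ * n = 1 := by
    have hcx : (g * n * g⁻¹ * n) • x = x := by
      rw [mul_smul, hn, mul_smul, inv_smul_smul, mul_smul, hn, ← mul_smul, hx]
    exact congrArg Subtype.val (hsemi ⟨_, hcN⟩ ⟨x, hcx⟩)
  refine ⟨n⁻¹ * g, mul_mem (le_orbitKernel (inv_mem hnN)) hg, ?_, ?_⟩
  · rw [mul_smul, ← hn, inv_smul_smul]
  · calc n⁻¹ * g * (n⁻¹ * g) = (g * n * g⁻¹ * n)⁻¹ * (g * g) := by group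
      _ = g * g := by rw [hc, inv_one, one_mul]

end OrbitQuotient

section QuotientGraph

variable {V G : Type*} [Group G] [MulAction G V] {Γ : SimpleGraph V} {N : Subgroup G}

lemma quotGraph_adj_orbitClass_iff (hact : ∀ (g : G) (u v : V), Γ.Adj (g • u) (g • v) ↔ Γ.Adj u v)
    {x : V} {O : orbitRel.Quotient N V} :
    (quotGraph N Γ).Adj (orbitClass N x) O ↔
      orbitClass N x ≠ O ∧ ∃ z, Γ.Adj x z ∧ orbitClass N z = O := by
  constructor
  · rw [quotGraph, fromRel_adj]
    rintro ⟨hne, hrel⟩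
    refine ⟨hne, ?_⟩
    have : ∃ u w, orbitClass N u = orbitClass N x ∧ orbitClass N w = O ∧ Γ.Adj u w := by
      rcases hrel with ⟨u, w, hu, hw, huw⟩ | ⟨w, u, hw, hu, hwu⟩
      · exact ⟨u, w, hu, hw, huw⟩
      · exact ⟨u, w, hu, hw, hwu.symm⟩
    obtain ⟨u, w, hu, rfl, huw⟩ := this
    obtain ⟨n, rfl⟩ := orbitClass_eq_iff.mp hu
    refine ⟨n⁻¹ • w, ?_, ?_⟩
    · simpa [Subgroup.smul_def] using (hact (n : G)⁻¹ (n • x) w).mpr huw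
    · exact orbitRel.Quotient.quotient_smul_eq
  · rintro ⟨hne, z, hxz, rfl⟩
    exact (fromRel_adj _ _ _).mpr ⟨hne, Or.inl ⟨x, z, rfl, rfl, hxz⟩⟩

lemma orbitClass_ne_of_adj (hN : N.Normal)
    (hat : ∀ u v u' v' : V, Γ.Adj u v → Γ.Adj u' v' → ∃ g : G, g • u = u' ∧ g • v = v')
    (hquot : ∃ O O', (quotGraph N Γ).Adj O O') {x z : V} (hxz : Γ.Adj x z) :
    orbitClass N x ≠ orbitClass N z := by
  obtain ⟨O, O', hOO'⟩ := hquot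
  have : ∃ u w, Γ.Adj u w ∧ orbitClass N u ≠ orbitClass N w := by
    rw [quotGraph, fromRel_adj] at hOO'
    rcases hOO' with ⟨hne, ⟨u, w, rfl, rfl, huw⟩ | ⟨u, w, rfl, rfl, huw⟩⟩
    · exact ⟨u, w, huw, hne⟩
    · exact ⟨u, w, huw, hne.symm⟩
  obtain ⟨u, w, huw, hne⟩ := this
  intro h
  obtain ⟨g, rfl, rfl⟩ := hat x z u w hxz huw
  exact hne (hN.orbitClass_smul_eq g h)

def neighborsInOrbit (Γ : SimpleGraph V) (N : Subgroup G) (x y : V) : Set V :=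
  {z | Γ.Adj x z ∧ orbitClass N z = orbitClass N y}

lemma image_smul_neighborsInOrbit (hN : N.Normal)
    (hact : ∀ (g : G) (u v : V), Γ.Adj (g • u) (g • v) ↔ Γ.Adj u v)
    {a : G} {x : V} (hx : a • x = x) (y : V) :
    (a • ·) '' neighborsInOrbit Γ N x y = neighborsInOrbit Γ N x (a • y) := by
  have hx' : a⁻¹ • x = x := inv_smul_eq_iff.mpr hx.symm
  ext w
  constructor
  · rintro ⟨z, ⟨hxz, hzy⟩, rfl⟩
    exact ⟨by simpa only [hx] using (hact a x z).mpr hxz, hN.orbitClass_smul_eq a hzy⟩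
  · rintro ⟨hxw, hwy⟩
    refine ⟨a⁻¹ • w, ⟨?_, ?_⟩, smul_inv_smul a w⟩
    · simpa only [hx'] using (hact a⁻¹ x w).mpr hxw
    · simpa only [inv_smul_smul] using hN.orbitClass_smul_eq a⁻¹ hwy

lemma ncard_neighborsInOrbit_eq_two (hN : N.Normal)
    (hact : ∀ (g : G) (u v : V), Γ.Adj (g • u) (g • v) ↔ Γ.Adj u v)
    (hat : ∀ u v u' v' : V, Γ.Adj u v → Γ.Adj u' v' → ∃ g : G, g • u = u' ∧ g • v = v')
    {x : V} (hval : Nat.card (Γ.neighborSet x) = 4)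
    (hquot : ((quotGraph N Γ).neighborSet (orbitClass N x)).ncard = 2)
    {y : V} (hxy : Γ.Adj x y) :
    (neighborsInOrbit Γ N x y).ncard = 2 := by
  have hquotEdge : ∃ O O', (quotGraph N Γ).Adj O O' := by
    obtain ⟨O', hO'⟩ := Set.nonempty_of_ncard_ne_zero (hquot.trans_ne two_ne_zero)
    exact ⟨_, O', hO'⟩
  have hquotAdj : ∀ {z}, Γ.Adj x z → (quotGraph N Γ).Adj (orbitClass N x) (orbitClass N z) :=
    fun hxz ↦ (quotGraph_adj_orbitClass_iff hact).mpr
      ⟨orbitClass_ne_of_adj hN hat hquotEdge hxz, _, hxz, rfl⟩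
  obtain ⟨O, hyO, hpair⟩ := Set.exists_ne_eq_pair_of_ncard_eq_two hquot (hquotAdj hxy)
  have hO : (quotGraph N Γ).Adj (orbitClass N x) O := by
    rw [← mem_neighborSet, hpair]
    exact Set.mem_insert_of_mem _ rfl
  obtain ⟨-, y₂, hxy₂, rfl⟩ := (quotGraph_adj_orbitClass_iff hact).mp hO
  have hsplit : Γ.neighborSet x = neighborsInOrbit Γ N x y ∪ neighborsInOrbit Γ N x y₂ := by
    ext z
    refine ⟨fun hxz ↦ ?_, fun hz ↦ hz.elim And.left And.left⟩
    have hz : orbitClass N z ∈ ({orbitClass N y, orbitClass N y₂} : Set _) :=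
      hpair ▸ hquotAdj hxz
    rcases hz with hz | hz
    · exact Or.inl ⟨hxz, hz⟩
    · exact Or.inr ⟨hxz, hz⟩
  have hdisj : Disjoint (neighborsInOrbit Γ N x y) (neighborsInOrbit Γ N x y₂) :=
    Set.disjoint_left.mpr fun _ hz hz₂ ↦ hyO (hz.2.symm.trans hz₂.2)
  have hcard : (neighborsInOrbit Γ N x y).ncard = (neighborsInOrbit Γ N x y₂).ncard := by
    obtain ⟨a, hax, hay⟩ := hat x y x y₂ hxy hxy₂
    rw [← hay, ← image_smul_neighborsInOrbit hN hact hax,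
      Set.ncard_image_of_injective _ (MulAction.injective a)]
  have hfin : (Γ.neighborSet x).Finite := Set.finite_of_ncard_ne_zero (by
    rw [← Nat.card_coe_set_eq, hval]; omega)
  have hsum : (neighborsInOrbit Γ N x y).ncard + (neighborsInOrbit Γ N x y₂).ncard = 4 := by
    rw [← Set.ncard_union_eq hdisj (hfin.subset (hsplit ▸ Set.subset_union_left))
      (hfin.subset (hsplit ▸ Set.subset_union_right)), ← hsplit, ← Nat.card_coe_set_eq, hval]
  omega

end QuotientGraph

section Propagation

variable {V G : Type*} [Group G] [MulAction G V] {Γ : SimpleGraph V} {N : Subgroup G}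

lemma mul_self_smul_eq_of_adj_of_smul_eq (hN : N.Normal)
    (hact : ∀ (g : G) (u v : V), Γ.Adj (g • u) (g • v) ↔ Γ.Adj u v)
    (hat : ∀ u v u' v' : V, Γ.Adj u v → Γ.Adj u' v' → ∃ g : G, g • u = u' ∧ g • v = v')
    {x : V} (hval : Nat.card (Γ.neighborSet x) = 4)
    (hquot : ((quotGraph N Γ).neighborSet (orbitClass N x)).ncard = 2)
    {h : G} (hh : h ∈ orbitKernel N V) (hx : h • x = x) {y : V} (hxy : Γ.Adj x y) :
    (h * h) • y = y := by
  have hmaps : Set.MapsTo (h • ·) (neighborsInOrbit Γ N x y) (neighborsInOrbit Γ N x y) := by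
    rw [Set.mapsTo_iff_image_subset, image_smul_neighborsInOrbit hN hact hx]
    simp only [neighborsInOrbit, orbitClass_smul_of_mem_orbitKernel hh, subset_refl]
  rw [mul_smul]
  exact hmaps.apply_apply_eq_of_ncard_eq_two (MulAction.injective h)
    (ncard_neighborsInOrbit_eq_two hN hact hat hval hquot hxy) ⟨hxy, rfl⟩

lemma mul_self_smul_eq_of_adj (hN : N.Normal)
    (hsemi : ∀ n : N, (∃ v : V, n • v = v) → n = 1)
    (hact : ∀ (g : G) (u v : V), Γ.Adj (g • u) (g • v) ↔ Γ.Adj u v)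
    (hat : ∀ u v u' v' : V, Γ.Adj u v → Γ.Adj u' v' → ∃ g : G, g • u = u' ∧ g • v = v')
    {x : V} (hval : Nat.card (Γ.neighborSet x) = 4)
    (hquot : ((quotGraph N Γ).neighborSet (orbitClass N x)).ncard = 2)
    {g : G} (hg : g ∈ orbitKernel N V) (hx : (g * g) • x = x) {y : V} (hxy : Γ.Adj x y) :
    (g * g) • y = y := by
  obtain ⟨h, hh, hhx, hhg⟩ := exists_mem_orbitKernel_smul_eq_mul_self_eq hN hsemi hg hx
  rw [← hhg]
  exact mul_self_smul_eq_of_adj_of_smul_eq hN hact hat hval hquot hh hhx hxy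

lemma SimpleGraph.Preconnected.forall_of_forall_adj_imp (hconn : Γ.Preconnected)
    {P : V → Prop} (hP : ∀ x y, Γ.Adj x y → P x → P y) {v : V} (hv : P v) (u : V) : P u := by
  obtain ⟨p⟩ := hconn v u
  induction p with
  | nil => exact hv
  | cons hxy _ ih => exact ih (hP _ _ hxy hv)

lemma mul_self_eq_one_of_mem_orbitKernel_of_smul_eq [FaithfulSMul G V] (hconn : Γ.Connected)
    (hN : N.Normal) (hsemi : ∀ n : N, (∃ v : V, n • v = v) → n = 1)
    (hact : ∀ (g : G) (u v : V), Γ.Adj (g • u) (g • v) ↔ Γ.Adj u v)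
    (hat : ∀ u v u' v' : V, Γ.Adj u v → Γ.Adj u' v' → ∃ g : G, g • u = u' ∧ g • v = v')
    (hval : ∀ x : V, Nat.card (Γ.neighborSet x) = 4)
    (hquot : ∀ x : V, ((quotGraph N Γ).neighborSet (orbitClass N x)).ncard = 2)
    {g : G} (hg : g ∈ orbitKernel N V) {v : V} (hv : g • v = v) : g * g = 1 := by
  refine FaithfulSMul.eq_of_smul_eq_smul (α := V) fun u ↦ ?_
  rw [one_smul]
  refine hconn.preconnected.forall_of_forall_adj_imp (P := fun x ↦ (g * g) • x = x)
    (fun x _ hxy hx ↦ ?_) (by rw [mul_smul, hv, hv]) u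
  exact mul_self_smul_eq_of_adj hN hsemi hact hat (hval x) (hquot x) hg hx hxy

end Propagation

lemma SimpleGraph.ncard_neighborSet_cycleGraph {n : ℕ} (hn : 3 ≤ n) (c : Fin n) :
    ((cycleGraph n).neighborSet c).ncard = 2 := by
  obtain ⟨m, rfl⟩ := Nat.exists_eq_add_of_le' hn
  rw [← coe_neighborFinset, Set.ncard_coe_finset, card_neighborFinset_eq_degree,
    cycleGraph_degree_three_le]

lemma SimpleGraph.Iso.ncard_neighborSet {W W' : Type*} {H : SimpleGraph W} {H' : SimpleGraph W'}
    (e : H ≃g H') (w : W) : (H'.neighborSet (e w)).ncard = (H.neighborSet w).ncard := by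
  rw [← Nat.card_coe_set_eq, ← Nat.card_coe_set_eq]
  exact Nat.card_congr (e.mapNeighborSet w).symm

lemma Subgroup.mul_comm_of_forall_mul_self_eq_one {G : Type*} [Group G] {H : Subgroup G}
    (hH : ∀ g ∈ H, g * g = 1) {a b : G} (ha : a ∈ H) (hb : b ∈ H) : a * b = b * a := by
  have hH2 : ∀ g : H, orderOf g ∣ 2 := fun g ↦
    orderOf_dvd_of_pow_eq_one (by rw [pow_two]; exact Subtype.ext (hH g g.2))
  exact congrArg Subtype.val (Commute.of_orderOf_dvd_two hH2 ⟨a, ha⟩ ⟨b, hb⟩).eq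

theorem statement6_general {V G : Type*} [Group G] [MulAction G V] [FaithfulSMul G V]
    (Γ : SimpleGraph V) (hconn : Γ.Connected)
    (hval : ∀ v : V, Nat.card (Γ.neighborSet v) = 4)
    (hact : ∀ (g : G) (u v : V), Γ.Adj (g • u) (g • v) ↔ Γ.Adj u v)
    (hat : ∀ u v u' v' : V, Γ.Adj u v → Γ.Adj u' v' → ∃ g : G, g • u = u' ∧ g • v = v')
    (N : Subgroup G) (hNnormal : N.Normal)
    (hsemi : ∀ n : N, (∃ v : V, n • v = v) → n = 1)
    (r : ℕ) (hr : 3 ≤ r) (hcyc : Nonempty (quotGraph N Γ ≃g SimpleGraph.cycleGraph r))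
    (v : V) :
    (∀ g : G, (∀ u : V, g • u ∈ MulAction.orbit N u) → g • v = v → g * g = 1) ∧
      (∀ g h : G, (∀ u : V, g • u ∈ MulAction.orbit N u) → g • v = v →
        (∀ u : V, h • u ∈ MulAction.orbit N u) → h • v = v → g * h = h * g) := by
  obtain ⟨e⟩ := hcyc
  have hquot (x : V) : ((quotGraph N Γ).neighborSet (orbitClass N x)).ncard = 2 := by
    rw [← e.ncard_neighborSet]
    exact ncard_neighborSet_cycleGraph hr _
  have hsq : ∀ g ∈ orbitKernel N V ⊓ stabilizer G v, g * g = 1 := fun g hg ↦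
    mul_self_eq_one_of_mem_orbitKernel_of_smul_eq hconn hNnormal hsemi hact hat hval hquot
      hg.1 hg.2
  exact ⟨fun g hg hgv ↦ hsq g ⟨hg, hgv⟩, fun g h hg hgv hh hhv ↦
    Subgroup.mul_comm_of_forall_mul_self_eq_one hsq ⟨hg, hgv⟩ ⟨hh, hhv⟩⟩

/-- Lemma 2.7: if `G ≤ Aut Γ` is arc-transitive on a connected 4-valent graph `Γ`,
`N ⊴ G` is semiregular and `Γ/N` is a cycle of length `r ≥ 3`, then for the kernel `K`
of the action of `G` on the `N`-orbits, every vertex-stabiliser `K_v` is an elementary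
abelian 2-group. -/
theorem statement6 {V G : Type*} [Fintype V] [Group G] [MulAction G V] [FaithfulSMul G V]
    (Γ : SimpleGraph V) (hconn : Γ.Connected)
    (hval : ∀ v : V, Nat.card (Γ.neighborSet v) = 4)
    (hact : ∀ (g : G) (u v : V), Γ.Adj (g • u) (g • v) ↔ Γ.Adj u v)
    (hat : ∀ u v u' v' : V, Γ.Adj u v → Γ.Adj u' v' → ∃ g : G, g • u = u' ∧ g • v = v')
    (N : Subgroup G) (hNnormal : N.Normal)
    (hsemi : ∀ n : N, (∃ v : V, n • v = v) → n = 1)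
    (r : ℕ) (hr : 3 ≤ r) (hcyc : Nonempty (quotGraph N Γ ≃g SimpleGraph.cycleGraph r))
    (v : V) :
    (∀ g : G, (∀ u : V, g • u ∈ MulAction.orbit N u) → g • v = v → g * g = 1) ∧
      (∀ g h : G, (∀ u : V, g • u ∈ MulAction.orbit N u) → g • v = v →
        (∀ u : V, h • u ∈ MulAction.orbit N u) → h • v = v → g * h = h * g) :=
  statement6_general Γ hconn hval hact hat N hNnormal hsemi r hr hcyc v
end

section
/- Let Γ be a finite connected 3-valent simple graph whose full automorphism group acts transitively on the vertices. If there exist two distinct vertices u and u' of Γ with Γ(u) = Γ(u'), then Γ is isomorphic to the complete bipartite graph K_{3,3}. -/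
open SimpleGraph

/-!
Vertices with the same neighbourhood form twin classes, which vertex-transitivity makes all of
one size `c`. For a neighbour `a` of `u`, the twin class of `u` lies in `Γ(a)`, so `c ≤ 3`, and
`Γ(u)` is a disjoint union of twin classes, so `c = 3` as the twins `u, u'` give `c ≥ 2`.
Hence every neighbour of `u` has the twin class `B` of `u` as its neighbourhood, every vertex
of `B` has `Γ(u)` as its neighbourhood, and by connectedness `Γ(u)` and `B` are complementary:
`Γ ≅ K_{3,3}`.
-/

namespace SimpleGraph

variable {V W : Type*} (Γ : SimpleGraph V)

def twinClass (v : V) : Set V := {w | Γ.neighborSet w = Γ.neighborSet v}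

variable {Γ}

theorem mem_twinClass {v w : V} : w ∈ Γ.twinClass v ↔ Γ.neighborSet w = Γ.neighborSet v :=
  Iff.rfl

theorem mem_twinClass_self (v : V) : v ∈ Γ.twinClass v := rfl

theorem twinClass_subset_neighborSet {v w : V} (h : Γ.Adj v w) :
    Γ.twinClass v ⊆ Γ.neighborSet w := fun x hx =>
  Γ.adj_symm (show w ∈ Γ.neighborSet x by rw [hx]; exact h)

theorem disjoint_twinClass {v w : V} (h : w ∉ Γ.twinClass v) :
    Disjoint (Γ.twinClass v) (Γ.twinClass w) :=
  Set.disjoint_left.2 fun _ hv hw => h (hw.symm.trans hv)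

theorem Iso.image_twinClass {Γ' : SimpleGraph W} (e : Γ ≃g Γ') (v : V) :
    e '' Γ.twinClass v = Γ'.twinClass (e v) := by
  ext x
  obtain ⟨y, rfl⟩ := e.surjective x
  rw [e.injective.mem_set_image, mem_twinClass, mem_twinClass, ← e.image_neighborSet,
    ← e.image_neighborSet, (Set.image_injective.2 e.injective).eq_iff]

end SimpleGraph

theorem VertexTransitive.ncard_twinClass_eq {V : Type*} {Γ : SimpleGraph V}
    (hvt : VertexTransitive Γ) (v w : V) :
    (Γ.twinClass v).ncard = (Γ.twinClass w).ncard := by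
  obtain ⟨e, rfl⟩ := hvt v w
  rw [← e.image_twinClass, Set.ncard_image_of_injective _ e.injective]

namespace SimpleGraph

variable {V : Type*} {Γ : SimpleGraph V}

theorem neighborSet_eq_twinClass_of_adj {k : ℕ} (hk : k ≠ 0)
    (hreg : ∀ v, (Γ.neighborSet v).ncard = k) (hvt : VertexTransitive Γ) {u a : V}
    (hlt : k < 2 * (Γ.twinClass u).ncard) (h : Γ.Adj u a) :
    Γ.neighborSet a = Γ.twinClass u := by
  have hfin : ∀ v, (Γ.neighborSet v).Finite := fun v =>
    Set.finite_of_ncard_ne_zero (by rw [hreg]; exact hk)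
  -- Otherwise `Γ(u)` would contain two disjoint twin classes, of total size `> k`.
  have hcard : k ≤ (Γ.twinClass u).ncard := by
    by_contra! hc
    have hsub : ∀ w ∈ Γ.neighborSet u, Γ.twinClass w ⊆ Γ.neighborSet u := fun w hw =>
      twinClass_subset_neighborSet (Γ.adj_symm hw)
    have hfin' : ∀ w ∈ Γ.neighborSet u, (Γ.twinClass w).Finite := fun w hw =>
      (hfin u).subset (hsub w hw)
    rw [hvt.ncard_twinClass_eq u a, ← hreg u] at hc
    obtain ⟨w, hw, hwa⟩ := Set.exists_mem_notMem_of_ncard_lt_ncard hc (hfin' a h)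
    have := Set.ncard_le_ncard (Set.union_subset (hsub a h) (hsub w hw)) (hfin u)
    rw [Set.ncard_union_eq (disjoint_twinClass hwa) (hfin' a h) (hfin' w hw), hreg,
      ← hvt.ncard_twinClass_eq u a, ← hvt.ncard_twinClass_eq u w] at this
    omega
  exact (Set.eq_of_subset_of_ncard_le (twinClass_subset_neighborSet h)
    (by rw [hreg]; exact hcard) (hfin a)).symm

theorem Preconnected.compl_eq_of_neighborSet (hconn : Γ.Preconnected) {A B : Set V}
    (hA : ∀ a ∈ A, Γ.neighborSet a = B) (hB : ∀ b ∈ B, Γ.neighborSet b = A) {v : V}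
    (hv : v ∈ B) : Aᶜ = B := by
  have hdisj : Disjoint A B := Set.disjoint_left.2 fun a ha hb =>
    Γ.loopless.irrefl a (show a ∈ Γ.neighborSet a by rw [hB a hb]; exact ha)
  have hcover : ∀ w, w ∈ A ∪ B := by
    intro w
    by_contra hw
    obtain ⟨d, -, hd, hd'⟩ := (hconn v w).some.exists_boundary_dart _ (Or.inr hv) hw
    refine hd' (hd.elim (fun ha => Or.inr ?_) (fun hb => Or.inl ?_))
    · rw [← hA _ ha]; exact d.adj
    · rw [← hB _ hb]; exact d.adj
  ext w
  exact ⟨fun hw => (hcover w).resolve_left hw, fun hw ha => hdisj.ne_of_mem ha hw rfl⟩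

theorem nonempty_iso_completeBipartiteGraph_of_neighborSet {A : Set V}
    (hA : ∀ a ∈ A, Γ.neighborSet a = Aᶜ) (hB : ∀ b ∉ A, Γ.neighborSet b = A) :
    Nonempty (Γ ≃g completeBipartiteGraph A ↥Aᶜ) := by
  classical
  refine ⟨⟨(Equiv.Set.sumCompl A).symm, fun {v w} => ?_⟩⟩
  have hadj : ∀ v w, Γ.Adj v w ↔ (v ∈ A ↔ w ∉ A) := by
    intro v w
    by_cases hv : v ∈ A
    · rw [← mem_neighborSet, hA v hv]; simp [hv]
    · rw [← mem_neighborSet, hB v hv]; simp [hv]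
  rw [hadj]
  by_cases hv : v ∈ A <;> by_cases hw : w ∈ A <;>
    simp [hv, hw, Equiv.Set.sumCompl_symm_apply_of_mem, Equiv.Set.sumCompl_symm_apply_of_notMem]

end SimpleGraph

theorem statement15_general {V : Type*} (Γ : SimpleGraph V)
    (hconn : Γ.Connected) (hval : ∀ v : V, Nat.card (Γ.neighborSet v) = 3)
    (hvt : VertexTransitive Γ)
    (u u' : V) (huu' : u ≠ u') (hnbr : Γ.neighborSet u = Γ.neighborSet u') :
    Nonempty (Γ ≃g completeBipartiteGraph (Fin 3) (Fin 3)) := by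
  have hreg : ∀ v, (Γ.neighborSet v).ncard = 3 := fun v => by
    rw [← Nat.card_coe_set_eq, hval]
  obtain ⟨a, ha⟩ := Set.nonempty_of_ncard_ne_zero (s := Γ.neighborSet u) (by rw [hreg]; simp)
  have htwins : 1 < (Γ.twinClass u).ncard :=
    (Set.one_lt_ncard ((Set.finite_of_ncard_ne_zero (by rw [hreg a]; simp)).subset
      (twinClass_subset_neighborSet ha))).2 ⟨u, mem_twinClass_self u, u', hnbr.symm, huu'⟩
  have hA : ∀ a ∈ Γ.neighborSet u, Γ.neighborSet a = Γ.twinClass u := fun a ha =>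
    neighborSet_eq_twinClass_of_adj (by simp) hreg hvt (by omega) ha
  have hcompl := hconn.preconnected.compl_eq_of_neighborSet hA (fun b hb => hb)
    (mem_twinClass_self u)
  obtain ⟨e⟩ := nonempty_iso_completeBipartiteGraph_of_neighborSet
    (fun a ha => (hA a ha).trans hcompl.symm) (fun b hb => hcompl.subset hb)
  have hcard : ∀ s : Set V, Nat.card s = 3 → Nonempty (s ≃ Fin 3) := fun s hs =>
    have := Nat.finite_of_card_ne_zero (hs ▸ three_ne_zero)
    ⟨Finite.equivFinOfCardEq hs⟩
  obtain ⟨eA⟩ := hcard _ (hval u)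
  obtain ⟨eB⟩ := hcard (Γ.neighborSet u)ᶜ (by rw [hcompl, Nat.card_coe_set_eq, ← hA a ha, hreg])
  exact ⟨(completeBipartiteGraphCongr eA eB).comp e⟩

/-- Lemma 4.2: a connected 3-valent vertex-transitive graph with two distinct vertices
having the same neighbourhood is isomorphic to `K_{3,3}`. -/
theorem statement15 {V : Type*} [Fintype V] (Γ : SimpleGraph V)
    (hconn : Γ.Connected) (hval : ∀ v : V, Nat.card (Γ.neighborSet v) = 3)
    (hvt : VertexTransitive Γ)
    (u u' : V) (huu' : u ≠ u') (hnbr : Γ.neighborSet u = Γ.neighborSet u') :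
    Nonempty (Γ ≃g completeBipartiteGraph (Fin 3) (Fin 3)) :=
  statement15_general Γ hconn hval hvt u u' huu' hnbr
end

section
/- Let Γ be a finite connected 4-valent simple graph whose full automorphism group acts transitively on the arcs of Γ, and suppose no two distinct vertices of Γ have the same neighbourhood. Let g be a non-identity automorphism of Γ with fpr_{VΓ}(g) > 1/3 that fixes no arc of Γ, i.e. there is no pair of adjacent vertices u, w with u^g = u and w^g = w. Then for every three pairwise distinct vertices v_1, v_2, v_3 fixed by g one has Γ(v_1) ∩ Γ(v_2) ∩ Γ(v_3) = ∅. -/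
open SimpleGraph

/-- Step 2 in the proof of Theorem 4.3: in a connected 4-valent arc-transitive graph
with no two distinct vertices sharing the same neighbourhood, a non-identity
automorphism `g` fixing no arc and more than 1/3 of the vertices cannot fix three
distinct vertices with a common neighbour. -/
theorem statement17 {V : Type*} [Fintype V] (Γ : SimpleGraph V)
    (hconn : Γ.Connected) (hval : ∀ v : V, Nat.card (Γ.neighborSet v) = 4)
    (hat : ArcTransitive Γ)
    (htwin : ∀ u u' : V, Γ.neighborSet u = Γ.neighborSet u' → u = u')
    (g : Γ ≃g Γ) (hg : ∃ v, g v ≠ v) (hfpr : fpr (fun v => g v) > 1 / 3)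
    (hnoarc : ¬ ∃ u w : V, Γ.Adj u w ∧ g u = u ∧ g w = w) :
    ∀ v₁ v₂ v₃ : V, g v₁ = v₁ → g v₂ = v₂ → g v₃ = v₃ →
      v₁ ≠ v₂ → v₁ ≠ v₃ → v₂ ≠ v₃ →
      Γ.neighborSet v₁ ∩ Γ.neighborSet v₂ ∩ Γ.neighborSet v₃ = ∅ := by
  classical
  intro v₁ v₂ v₃ hv1 hv2 hv3 h12 h13 h23
  rw [Set.eq_empty_iff_forall_notMem]
  intro p hp
  obtain ⟨⟨hp1, hp2⟩, hp3⟩ := hp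
  rw [SimpleGraph.mem_neighborSet] at hp1 hp2 hp3
  -- valency 4 as a Finset statement
  have hval4 : ∀ v : V, (Γ.neighborFinset v).card = 4 := by
    intro v
    have h := hval v
    rwa [Nat.card_eq_fintype_card, SimpleGraph.card_neighborSet_eq_degree] at h
  have F2 : ∀ a b : V, Γ.Adj a b → g a = a → g b = b → False := by
    intro a b hab ha hb
    exact hnoarc ⟨a, b, hab, ha, hb⟩
  have twinF : ∀ a b : V, Γ.neighborFinset a = Γ.neighborFinset b → a = b := by
    intro a b hab
    apply htwin
    ext x
    have := Finset.ext_iff.mp hab x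
    simpa [SimpleGraph.mem_neighborFinset] using this
  have L1 : ∀ a b : V, a ≠ b →
      4 ≤ (Γ.neighborFinset a ∩ Γ.neighborFinset b).card → False := by
    intro a b hne hc
    have h1 : Γ.neighborFinset a ∩ Γ.neighborFinset b = Γ.neighborFinset a :=
      Finset.eq_of_subset_of_card_le Finset.inter_subset_left (by rw [hval4]; exact hc)
    have h2 : Γ.neighborFinset a ∩ Γ.neighborFinset b = Γ.neighborFinset b :=
      Finset.eq_of_subset_of_card_le Finset.inter_subset_right (by rw [hval4]; exact hc)
    exact hne (twinF a b (h1.symm.trans h2))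
  have himg : ∀ (e : Γ ≃g Γ) (a : V),
      Γ.neighborFinset (e a) = (Γ.neighborFinset a).image e := by
    intro e a
    ext x
    simp only [Finset.mem_image, SimpleGraph.mem_neighborFinset]
    constructor
    · intro hx
      refine ⟨e.symm x, ?_, e.apply_symm_apply x⟩
      have h2 : Γ.Adj (e a) (e (e.symm x)) := by
        rw [e.apply_symm_apply]; exact hx
      exact e.map_adj_iff.mp h2
    · rintro ⟨y, hy, rfl⟩
      exact e.map_adj_iff.mpr hy
  have L2 : ∀ (e : Γ ≃g Γ) (a b : V),
      (Γ.neighborFinset (e a) ∩ Γ.neighborFinset (e b)).card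
        = (Γ.neighborFinset a ∩ Γ.neighborFinset b).card := by
    intro e a b
    rw [himg e a, himg e b, ← Finset.image_inter _ _ (EquivLike.injective e),
      Finset.card_image_of_injective _ (EquivLike.injective e)]
  have madj : ∀ v a : V, g v = v → Γ.Adj v a → Γ.Adj v (g a) := by
    intro v a hv hva
    have := g.map_adj_iff.mpr hva
    rwa [hv] at this
  have hsymmfix : ∀ v : V, g v = v → g.symm v = v := by
    intro v hv
    conv_lhs => rw [← hv]
    exact g.symm_apply_apply v
  have madj' : ∀ v a : V, g v = v → Γ.Adj v a → Γ.Adj v (g.symm a) := by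
    intro v a hv hva
    have := g.symm.map_adj_iff.mpr hva
    rwa [hsymmfix v hv] at this
  set Δ : Finset V :=
    (Γ.neighborFinset v₁ ∩ Γ.neighborFinset v₂) ∩ Γ.neighborFinset v₃ with hΔdef
  have hΔmem : ∀ a : V, a ∈ Δ ↔ Γ.Adj v₁ a ∧ Γ.Adj v₂ a ∧ Γ.Adj v₃ a := by
    intro a
    simp [hΔdef, SimpleGraph.mem_neighborFinset, and_assoc]
  have hΔg : ∀ a, a ∈ Δ → g a ∈ Δ := by
    intro a ha
    rw [hΔmem] at ha ⊢
    exact ⟨madj _ _ hv1 ha.1, madj _ _ hv2 ha.2.1, madj _ _ hv3 ha.2.2⟩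
  have hΔg' : ∀ a, a ∈ Δ → g.symm a ∈ Δ := by
    intro a ha
    rw [hΔmem] at ha ⊢
    exact ⟨madj' _ _ hv1 ha.1, madj' _ _ hv2 ha.2.1, madj' _ _ hv3 ha.2.2⟩
  have hΔfix : ∀ a, a ∈ Δ → g a ≠ a := by
    intro a ha heq
    exact F2 v₁ a ((hΔmem a).mp ha).1 hv1 heq
  have hpΔ : p ∈ Δ := (hΔmem p).mpr ⟨hp1, hp2, hp3⟩
  have hΔsub1 : Δ ⊆ Γ.neighborFinset v₁ := by
    intro a ha
    rw [SimpleGraph.mem_neighborFinset]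
    exact ((hΔmem a).mp ha).1
  have hΔle : Δ.card ≤ 4 := by
    calc Δ.card ≤ (Γ.neighborFinset v₁).card := Finset.card_le_card hΔsub1
    _ = 4 := hval4 v₁
  have hpgp : p ≠ g p := fun h => hΔfix p hpΔ h.symm
  have hpairsub : ({p, g p} : Finset V) ⊆ Δ := by
    intro a ha
    rcases Finset.mem_insert.mp ha with rfl | ha
    · exact hpΔ
    · rw [Finset.mem_singleton] at ha
      subst ha
      exact hΔg p hpΔ
  have hΔge : 2 ≤ Δ.card := by
    calc 2 = ({p, g p} : Finset V).card := (Finset.card_pair hpgp).symm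
    _ ≤ Δ.card := Finset.card_le_card hpairsub
  have hcases : Δ.card = 2 ∨ Δ.card = 3 ∨ Δ.card = 4 := by omega
  rcases hcases with hc2 | hc3 | hc4
  · -- main case : Δ = {p, g p}
    have hΔeq : Δ = ({p, g p} : Finset V) :=
      (Finset.eq_of_subset_of_card_le hpairsub
        (by rw [hc2, Finset.card_pair hpgp])).symm
    have hgu' : g (g p) = p := by
      have hmem : g (g p) ∈ Δ := hΔg _ (hΔg _ hpΔ)
      rw [hΔeq, Finset.mem_insert, Finset.mem_singleton] at hmem
      rcases hmem with h | h
      · exact h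
      · exact absurd h (hΔfix _ (hΔg _ hpΔ))
    have hgpΔ : g p ∈ Δ := hΔg p hpΔ
    have hA1' : Γ.Adj v₁ (g p) := ((hΔmem _).mp hgpΔ).1
    have hA2' : Γ.Adj v₂ (g p) := ((hΔmem _).mp hgpΔ).2.1
    have hA3' : Γ.Adj v₃ (g p) := ((hΔmem _).mp hgpΔ).2.2
    -- common neighbours of two fixed vertices are exactly {p, g p}
    have Dlem : ∀ a b : V, g a = a → g b = b → a ≠ b → Γ.Adj a p → Γ.Adj a (g p) →
        Γ.Adj b p → Γ.Adj b (g p) →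
        Γ.neighborFinset a ∩ Γ.neighborFinset b ⊆ ({p, g p} : Finset V) := by
      intro a b ha hb hab hap hap' hbp hbp' t ht
      by_contra htn
      rw [Finset.mem_insert, Finset.mem_singleton] at htn
      push_neg at htn
      obtain ⟨ht1, ht2⟩ := htn
      rw [Finset.mem_inter, SimpleGraph.mem_neighborFinset,
        SimpleGraph.mem_neighborFinset] at ht
      have hgt1 : Γ.Adj a (g t) := madj _ _ ha ht.1
      have hgt2 : Γ.Adj b (g t) := madj _ _ hb ht.2
      have htfix : g t ≠ t := fun h => F2 a t ht.1 ha h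
      have hgtp : g t ≠ p := by
        intro h
        exact ht2 (EquivLike.injective g (h.trans hgu'.symm))
      have hgtp' : g t ≠ g p := fun h => ht1 (EquivLike.injective g h)
      apply L1 a b hab
      have hsub4 : ({p, g p, t, g t} : Finset V) ⊆
          Γ.neighborFinset a ∩ Γ.neighborFinset b := by
        intro x hx
        simp only [Finset.mem_insert, Finset.mem_singleton] at hx
        rw [Finset.mem_inter, SimpleGraph.mem_neighborFinset,
          SimpleGraph.mem_neighborFinset]
        rcases hx with rfl | rfl | rfl | rfl
        exacts [⟨hap, hbp⟩, ⟨hap', hbp'⟩, ⟨ht.1, ht.2⟩, ⟨hgt1, hgt2⟩]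
      have hcard4 : ({p, g p, t, g t} : Finset V).card = 4 := by
        rw [Finset.card_insert_of_notMem (by simp [hpgp, Ne.symm ht1, Ne.symm hgtp]),
          Finset.card_insert_of_notMem (by simp [Ne.symm ht2, Ne.symm hgtp']),
          Finset.card_insert_of_notMem (by simp [Ne.symm htfix]),
          Finset.card_singleton]
      calc 4 = ({p, g p, t, g t} : Finset V).card := hcard4.symm
      _ ≤ _ := Finset.card_le_card hsub4
    have hvtriple : ({v₁, v₂, v₃} : Finset V).card = 3 := by
      rw [Finset.card_insert_of_notMem (by simp [h12, h13]),
        Finset.card_insert_of_notMem (by simp [h23]), Finset.card_singleton]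
    have eNoAdj : ∀ t : V, Γ.Adj p t → t ∉ ({v₁, v₂, v₃} : Finset V) →
        ¬ Γ.Adj (g p) t := by
      intro t hpt htn hadj
      apply L1 p (g p) hpgp
      simp only [Finset.mem_insert, Finset.mem_singleton] at htn
      push_neg at htn
      have hsub : ({v₁, v₂, v₃, t} : Finset V) ⊆
          Γ.neighborFinset p ∩ Γ.neighborFinset (g p) := by
        intro x hx
        simp only [Finset.mem_insert, Finset.mem_singleton] at hx
        rw [Finset.mem_inter, SimpleGraph.mem_neighborFinset,
          SimpleGraph.mem_neighborFinset]
        rcases hx with rfl | rfl | rfl | rfl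
        exacts [⟨hp1.symm, hA1'.symm⟩, ⟨hp2.symm, hA2'.symm⟩,
          ⟨hp3.symm, hA3'.symm⟩, ⟨hpt, hadj⟩]
      have hc : ({v₁, v₂, v₃, t} : Finset V).card = 4 := by
        rw [Finset.card_insert_of_notMem (by simp [h12, h13, Ne.symm htn.1]),
          Finset.card_insert_of_notMem (by simp [h23, Ne.symm htn.2.1]),
          Finset.card_insert_of_notMem (by simp [Ne.symm htn.2.2]),
          Finset.card_singleton]
      calc 4 = ({v₁, v₂, v₃, t} : Finset V).card := hc.symm
      _ ≤ _ := Finset.card_le_card hsub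
    have hcard3 : (Γ.neighborFinset p ∩ Γ.neighborFinset (g p)).card = 3 := by
      have hle : (Γ.neighborFinset p ∩ Γ.neighborFinset (g p)).card ≤ 3 := by
        by_contra hq
        exact L1 p (g p) hpgp (by omega)
      have hge : 3 ≤ (Γ.neighborFinset p ∩ Γ.neighborFinset (g p)).card := by
        have hsub : ({v₁, v₂, v₃} : Finset V) ⊆
            Γ.neighborFinset p ∩ Γ.neighborFinset (g p) := by
          intro x hx
          simp only [Finset.mem_insert, Finset.mem_singleton] at hx
          rw [Finset.mem_inter, SimpleGraph.mem_neighborFinset,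
            SimpleGraph.mem_neighborFinset]
          rcases hx with rfl | rfl | rfl
          exacts [⟨hp1.symm, hA1'.symm⟩, ⟨hp2.symm, hA2'.symm⟩, ⟨hp3.symm, hA3'.symm⟩]
        calc 3 = ({v₁, v₂, v₃} : Finset V).card := hvtriple.symm
        _ ≤ _ := Finset.card_le_card hsub
      omega
    -- first arc map : (v₁, p) ↦ (p, v₁)
    obtain ⟨e, he1, he2⟩ := hat v₁ p p v₁ hp1 hp1.symm
    set w := e (g p) with hwdef
    have hwu : Γ.Adj p w := by
      have := e.map_adj_iff.mpr hA1'
      rwa [he1] at this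
    have hwv1 : w ≠ v₁ := by
      intro h
      have h2 : e (g p) = e p := by rw [← hwdef, h, ← he2]
      exact hpgp (EquivLike.injective e h2).symm
    have hDle2 : ∀ a b : V, g a = a → g b = b → a ≠ b → Γ.Adj a p → Γ.Adj a (g p) →
        Γ.Adj b p → Γ.Adj b (g p) →
        (Γ.neighborFinset a ∩ Γ.neighborFinset b).card ≤ 2 := by
      intro a b ha hb hab hap hap' hbp hbp'
      calc (Γ.neighborFinset a ∩ Γ.neighborFinset b).card
          ≤ ({p, g p} : Finset V).card :=
            Finset.card_le_card (Dlem a b ha hb hab hap hap' hbp hbp')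
      _ = 2 := Finset.card_pair hpgp
    have hwcard : (Γ.neighborFinset v₁ ∩ Γ.neighborFinset w).card = 3 := by
      have h := L2 e p (g p)
      rw [he2, ← hwdef] at h
      rw [h]
      exact hcard3
    by_cases hw2 : w = v₂
    · rw [hw2] at hwcard
      have := hDle2 v₁ v₂ hv1 hv2 h12 hp1 hA1' hp2 hA2'
      omega
    by_cases hw3 : w = v₃
    · rw [hw3] at hwcard
      have := hDle2 v₁ v₃ hv1 hv3 h13 hp1 hA1' hp3 hA3'
      omega
    have hwmem : w ∉ ({v₁, v₂, v₃} : Finset V) := by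
      simp [hwv1, hw2, hw3]
    have hnadj : ¬ Γ.Adj (g p) w := eNoAdj w hwu hwmem
    -- second arc map : (p, w) ↦ (p, v₂)
    obtain ⟨e₂, he₂1, he₂2⟩ := hat p w p v₂ hwu hp2.symm
    set w₂ := e₂ v₁ with hw₂def
    have hw₂adj : Γ.Adj p w₂ := by
      have := e₂.map_adj_iff.mpr hp1.symm
      rwa [he₂1] at this
    have hw₂v2 : w₂ ≠ v₂ := by
      intro h
      have h2 : e₂ v₁ = e₂ w := by rw [← hw₂def, h, ← he₂2]
      exact hwv1 (EquivLike.injective e₂ h2).symm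
    have hw₂card : (Γ.neighborFinset v₂ ∩ Γ.neighborFinset w₂).card = 3 := by
      have h := L2 e₂ w v₁
      rw [he₂2, ← hw₂def] at h
      rw [h, Finset.inter_comm]
      exact hwcard
    by_cases hz1 : w₂ = v₁
    · rw [hz1] at hw₂card
      have := hDle2 v₂ v₁ hv2 hv1 (Ne.symm h12) hp2 hA2' hp1 hA1'
      omega
    by_cases hz3 : w₂ = v₃
    · rw [hz3] at hw₂card
      have := hDle2 v₂ v₃ hv2 hv3 h23 hp2 hA2' hp3 hA3'
      omega
    have hw₂mem : w₂ ∉ ({v₁, v₂, v₃} : Finset V) := by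
      simp [hz1, hw₂v2, hz3]
    -- w₂ = w since the neighbourhood of p has a unique element outside {v₁,v₂,v₃}
    have hsubv : ({v₁, v₂, v₃} : Finset V) ⊆ Γ.neighborFinset p := by
      intro x hx
      simp only [Finset.mem_insert, Finset.mem_singleton] at hx
      rw [SimpleGraph.mem_neighborFinset]
      rcases hx with rfl | rfl | rfl
      exacts [hp1.symm, hp2.symm, hp3.symm]
    have hsd1 : (Γ.neighborFinset p \ ({v₁, v₂, v₃} : Finset V)).card = 1 := by
      rw [Finset.card_sdiff_of_subset hsubv, hval4, hvtriple]
    have hzw : w₂ = w := by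
      have h1 : w ∈ Γ.neighborFinset p \ ({v₁, v₂, v₃} : Finset V) :=
        Finset.mem_sdiff.mpr ⟨(SimpleGraph.mem_neighborFinset _ _ _).mpr hwu, hwmem⟩
      have h2 : w₂ ∈ Γ.neighborFinset p \ ({v₁, v₂, v₃} : Finset V) :=
        Finset.mem_sdiff.mpr ⟨(SimpleGraph.mem_neighborFinset _ _ _).mpr hw₂adj, hw₂mem⟩
      exact Finset.card_le_one.mp (le_of_eq hsd1) w₂ h2 w h1
    rw [hzw] at hw₂card
    -- final counting
    set S₁ := Γ.neighborFinset v₁ ∩ Γ.neighborFinset w with hS₁def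
    set S₂ := Γ.neighborFinset v₂ ∩ Γ.neighborFinset w with hS₂def
    have hunion : (S₁ ∪ S₂).card ≤ 4 := by
      calc (S₁ ∪ S₂).card ≤ (Γ.neighborFinset w).card := by
            apply Finset.card_le_card
            intro x hx
            rcases Finset.mem_union.mp hx with h | h
            · exact (Finset.mem_inter.mp h).2
            · exact (Finset.mem_inter.mp h).2
      _ = 4 := hval4 w
    have hics := Finset.card_union_add_card_inter S₁ S₂
    have hsub1 : S₁ ∩ S₂ ⊆ ({p} : Finset V) := by
      intro t ht
      obtain ⟨ht1, ht2⟩ := Finset.mem_inter.mp ht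
      obtain ⟨ht1a, htw⟩ := Finset.mem_inter.mp ht1
      obtain ⟨ht2a, _⟩ := Finset.mem_inter.mp ht2
      have hmem : t ∈ ({p, g p} : Finset V) :=
        Dlem v₁ v₂ hv1 hv2 h12 hp1 hA1' hp2 hA2' (Finset.mem_inter.mpr ⟨ht1a, ht2a⟩)
      rw [Finset.mem_insert, Finset.mem_singleton] at hmem
      rcases hmem with rfl | rfl
      · exact Finset.mem_singleton_self _
      · exact absurd ((SimpleGraph.mem_neighborFinset _ _ _).mp htw).symm hnadj
    have hle1 : (S₁ ∩ S₂).card ≤ 1 := by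
      calc (S₁ ∩ S₂).card ≤ ({p} : Finset V).card := Finset.card_le_card hsub1
      _ = 1 := Finset.card_singleton p
    omega
  · -- |Δ| = 3
    have hsd : (Γ.neighborFinset v₁ \ Δ).card = 1 := by
      rw [Finset.card_sdiff_of_subset hΔsub1, hval4, hc3]
    obtain ⟨x, hx⟩ := Finset.card_eq_one.mp hsd
    have hxm : x ∈ Γ.neighborFinset v₁ \ Δ := hx ▸ Finset.mem_singleton_self x
    obtain ⟨hx1, hxΔ⟩ := Finset.mem_sdiff.mp hxm
    rw [SimpleGraph.mem_neighborFinset] at hx1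
    have hgx1 : g x ∈ Γ.neighborFinset v₁ := by
      rw [SimpleGraph.mem_neighborFinset]
      exact madj _ _ hv1 hx1
    have hgxΔ : g x ∉ Δ := by
      intro hmem
      apply hxΔ
      have h2 := hΔg' _ hmem
      rwa [g.symm_apply_apply] at h2
    have hmem : g x ∈ Γ.neighborFinset v₁ \ Δ := Finset.mem_sdiff.mpr ⟨hgx1, hgxΔ⟩
    rw [hx, Finset.mem_singleton] at hmem
    exact F2 v₁ x hx1 hv1 hmem
  · -- |Δ| = 4
    apply L1 v₁ v₂ h12
    calc 4 = Δ.card := hc4.symm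
    _ ≤ (Γ.neighborFinset v₁ ∩ Γ.neighborFinset v₂).card :=
      Finset.card_le_card (by rw [hΔdef]; exact Finset.inter_subset_left)
end

section
/- Let m ≥ 3 and let DW_m be the simple graph with vertex set (Z/mZ) × (Z/3Z) in which (x,i) is adjacent to (x+1,j) for all i ≠ j in Z/3Z. Then DW_m is connected, 4-valent and arc-transitive, and the permutation of its vertex set fixing every vertex (x,0) and swapping (x,1) with (x,2) for every x ∈ Z/mZ is an automorphism of DW_m fixing exactly m of the 3m vertices; in particular DW_m has a non-identity automorphism g with fpr_{V DW_m}(g) = 1/3. -/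
/-!
Every map `(x, i) ↦ (±x + c, π i)` with `π` a permutation of `ZMod 3` is an automorphism of
`DW m`, since adjacency only asks that the first coordinates differ by `±1` and the second ones
differ. As the symmetric group on `ZMod 3` is 2-transitive, these maps carry every arc to
`((0, 0), (1, 1))`, which gives arc-transitivity. Each `(x, i)` reaches every `(x + 1, j)`, so
`DW m` is connected, and the neighbours of `v` are `{v.1 + 1, v.1 - 1} × ({v.2}ᶜ)`, four vertices
once `2 ≠ 0` in `ZMod m`. The swap `σ` is the case `+x + 0, π = -id` and fixes exactly the
vertices `(x, 0)`.
-/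

open SimpleGraph

/-- The graph `DW_m` on `(ZMod m) × (ZMod 3)`: `(x,i)` is adjacent to `(x+1,j)` for
all `i ≠ j`. -/
def DW (m : ℕ) : SimpleGraph (ZMod m × ZMod 3) :=
  SimpleGraph.fromRel (fun a b => b.1 = a.1 + 1 ∧ a.2 ≠ b.2)

/-- The permutation of the vertices of `DW_m` fixing every `(x,0)` and swapping
`(x,1)` with `(x,2)`. -/
def dwSigma (m : ℕ) : Equiv.Perm (ZMod m × ZMod 3) :=
  (Equiv.refl (ZMod m)).prodCongr (Equiv.neg (ZMod 3))

theorem units_int_smul_eq_or_eq_neg_iff {G : Type*} [AddCommGroup G] (ε : ℤˣ) {d a : G} :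
    ε • d = a ∨ ε • d = -a ↔ d = a ∨ d = -a := by
  rcases Int.units_eq_one_or ε with rfl | rfl
  · simp only [one_smul]
  · simp only [Units.neg_smul, one_smul, neg_eq_iff_eq_neg, neg_neg, or_comm]

theorem exists_units_int_smul_eq {G : Type*} [AddGroup G] {d a : G} (h : d = a ∨ d = -a) :
    ∃ ε : ℤˣ, ε • d = a := by
  rcases h with rfl | rfl
  · exact ⟨1, one_smul _ _⟩
  · exact ⟨-1, by simp [Units.smul_def]⟩

theorem Equiv.Perm.exists_apply_eq_and_apply_eq {α : Type*} [DecidableEq α] {i j i' j' : α}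
    (h : i ≠ j) (h' : i' ≠ j') : ∃ π : Equiv.Perm α, π i = i' ∧ π j = j' := by
  refine ⟨(Equiv.swap i i').trans (Equiv.swap (Equiv.swap i i' j) j'), ?_, by simp⟩
  have hj : Equiv.swap i i' j ≠ i' := by
    rw [Ne, Equiv.swap_apply_eq_iff, Equiv.swap_apply_right]
    exact h.symm
  simp only [Equiv.trans_apply, Equiv.swap_apply_left]
  exact Equiv.swap_apply_of_ne_of_ne hj.symm h'

theorem ArcTransitive.of_forall_adj_exists_iso {V : Type*} {G : SimpleGraph V} (u₀ v₀ : V)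
    (h : ∀ u v, G.Adj u v → ∃ e : G ≃g G, e u = u₀ ∧ e v = v₀) : ArcTransitive G := by
  intro u v u' v' huv huv'
  obtain ⟨e, heu, hev⟩ := h u v huv
  obtain ⟨e', heu', hev'⟩ := h u' v' huv'
  refine ⟨e.trans e'.symm, ?_, ?_⟩
  · simp [heu, ← heu']
  · simp [hev, ← hev']

namespace DW

variable {m : ℕ}

theorem adj_iff {a b : ZMod m × ZMod 3} :
    (DW m).Adj a b ↔ (b.1 - a.1 = 1 ∨ b.1 - a.1 = -1) ∧ a.2 ≠ b.2 := by
  rw [DW, fromRel_adj]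
  grind

theorem adj_succ {x : ZMod m} {i j : ZMod 3} (h : i ≠ j) : (DW m).Adj (x, i) (x + 1, j) :=
  adj_iff.mpr ⟨Or.inl (add_sub_cancel_left x 1), h⟩

def affineIso (ε : ℤˣ) (c : ZMod m) (π : Equiv.Perm (ZMod 3)) : DW m ≃g DW m where
  toEquiv := ((MulAction.toPerm ε).trans (Equiv.addRight c)).prodCongr π
  map_rel_iff' {a b} := by
    simp only [Equiv.prodCongr_apply, Prod.map, Equiv.trans_apply, MulAction.toPerm_apply,
      Equiv.coe_addRight, adj_iff, add_sub_add_right_eq_sub, ← smul_sub,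
      units_int_smul_eq_or_eq_neg_iff, π.injective.ne_iff]

theorem affineIso_apply (ε : ℤˣ) (c : ZMod m) (π : Equiv.Perm (ZMod 3)) (a : ZMod m × ZMod 3) :
    affineIso ε c π a = (ε • a.1 + c, π a.2) := rfl

theorem arcTransitive : ArcTransitive (DW m) := by
  refine ArcTransitive.of_forall_adj_exists_iso (0, 0) (1, 1) fun u v huv => ?_
  obtain ⟨hd, hne⟩ := adj_iff.mp huv
  obtain ⟨ε, hε⟩ := exists_units_int_smul_eq hd
  obtain ⟨π, hπu, hπv⟩ := Equiv.Perm.exists_apply_eq_and_apply_eq hne (by decide : (0 : ZMod 3) ≠ 1)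
  refine ⟨affineIso ε (-(ε • u.1)) π, ?_, ?_⟩ <;> rw [affineIso_apply]
  · rw [hπu, add_neg_cancel]
  · rw [hπv, ← sub_eq_add_neg, ← smul_sub, hε]

theorem reachable_succ (x : ZMod m) (i j : ZMod 3) : (DW m).Reachable (x, i) (x + 1, j) := by
  by_cases h : i = j
  · subst h
    -- the detour `(x, i) ~ (x + 1, i + 1) ~ (x, i + 2) ~ (x + 1, i)`
    have h₁ : i ≠ i + 1 := by decide +revert
    have h₂ : i + 2 ≠ i + 1 := by decide +revert
    have h₃ : i + 2 ≠ i := by decide +revert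
    exact (adj_succ h₁).reachable.trans ((adj_succ h₂).symm.reachable.trans (adj_succ h₃).reachable)
  · exact (adj_succ h).reachable

theorem connected : (DW m).Connected := by
  have reach : ∀ n : ℤ, ∃ i, (DW m).Reachable (0, 0) ((n : ZMod m), i) := by
    intro n
    induction n using Int.induction_on with
    | zero => exact ⟨0, by simp⟩
    | succ n ih =>
      obtain ⟨i, hi⟩ := ih
      exact ⟨0, by simpa using hi.trans (reachable_succ _ i 0)⟩
    | pred n ih =>
      obtain ⟨i, hi⟩ := ih
      exact ⟨0, hi.trans (by simpa using (reachable_succ ((-n - 1 : ℤ) : ZMod m) 0 i).symm)⟩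
  refine (connected_iff_exists_forall_reachable _).mpr ⟨(0, 0), fun ⟨y, j⟩ => ?_⟩
  obtain ⟨n, hn⟩ := ZMod.intCast_surjective (y - 1)
  obtain ⟨i, hi⟩ := reach n
  simpa [hn] using hi.trans (reachable_succ _ i j)

theorem neighborSet_eq_prod (v : ZMod m × ZMod 3) :
    (DW m).neighborSet v = {v.1 + 1, v.1 - 1} ×ˢ {v.2}ᶜ := by
  ext w
  simp only [mem_neighborSet, adj_iff, Set.mem_prod, Set.mem_insert_iff, Set.mem_singleton_iff,
    Set.mem_compl_iff, sub_eq_iff_eq_add', ← sub_eq_add_neg, ne_comm]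

theorem card_neighborSet (h2 : (2 : ZMod m) ≠ 0) (v : ZMod m × ZMod 3) :
    Nat.card ((DW m).neighborSet v) = 4 := by
  have hpair : v.1 + 1 ≠ v.1 - 1 := fun h => h2 (by linear_combination h)
  rw [neighborSet_eq_prod, Nat.card_coe_set_eq, Set.ncard_prod, Set.ncard_pair hpair, Set.ncard_compl,
    Set.ncard_singleton, Nat.card_zmod]

end DW

theorem dwSigma_apply_eq_self_iff {m : ℕ} (a : ZMod m × ZMod 3) : dwSigma m a = a ↔ a.2 = 0 := by
  obtain ⟨x, i⟩ := a
  simp only [dwSigma, Equiv.prodCongr_apply, Prod.map, Equiv.refl_apply, Equiv.neg_apply,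
    Prod.ext_iff, true_and]
  decide +revert

theorem coe_dwSigma {m : ℕ} : ⇑(dwSigma m) = DW.affineIso 1 0 (Equiv.neg (ZMod 3)) := by
  funext a
  simp [DW.affineIso_apply, dwSigma, Prod.map]

theorem card_fixedPoints_dwSigma (m : ℕ) :
    Nat.card {a : ZMod m × ZMod 3 // dwSigma m a = a} = m := by
  have hfix : {a : ZMod m × ZMod 3 | dwSigma m a = a} = Set.univ ×ˢ {0} := by
    ext a
    simp [dwSigma_apply_eq_self_iff]
  rw [← Set.coe_ofPred, Nat.card_coe_set_eq, hfix, Set.ncard_prod, Set.ncard_univ,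
    Set.ncard_singleton, Nat.card_zmod, mul_one]

theorem DW.card_vertices (m : ℕ) : Nat.card (ZMod m × ZMod 3) = 3 * m := by
  rw [Nat.card_prod, Nat.card_zmod, Nat.card_zmod, mul_comm]

theorem fpr_dwSigma {m : ℕ} (hm : m ≠ 0) : fpr (fun a => dwSigma m a) = 1 / 3 := by
  rw [fpr, card_fixedPoints_dwSigma, DW.card_vertices]
  field_simp
  push_cast
  ring

/-- `DW_m` is connected, 4-valent and arc-transitive, and `dwSigma` is a
non-identity automorphism fixing exactly `m` of the `3m` vertices, so its
fixed-point ratio is exactly `1/3`. -/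
theorem statement18 (m : ℕ) (hm : 3 ≤ m) :
    (DW m).Connected ∧
      (∀ v, Nat.card ((DW m).neighborSet v) = 4) ∧
      ArcTransitive (DW m) ∧
      (∀ a b, (DW m).Adj (dwSigma m a) (dwSigma m b) ↔ (DW m).Adj a b) ∧
      (∃ a, dwSigma m a ≠ a) ∧
      Nat.card {a : ZMod m × ZMod 3 // dwSigma m a = a} = m ∧
      Nat.card (ZMod m × ZMod 3) = 3 * m ∧
      fpr (fun a => dwSigma m a) = 1 / 3 := by
  have h2 : (2 : ZMod m) ≠ 0 := by
    rw [← Nat.cast_ofNat, Ne, ZMod.natCast_eq_zero_iff]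
    exact fun h => by linarith [Nat.le_of_dvd two_pos h]
  refine ⟨DW.connected, DW.card_neighborSet h2, DW.arcTransitive,
    fun a b => by rw [coe_dwSigma]; exact Iso.map_adj_iff _,
    ⟨(0, 1), by rw [Ne, dwSigma_apply_eq_self_iff]; exact one_ne_zero⟩,
    card_fixedPoints_dwSigma m, DW.card_vertices m, fpr_dwSigma (by omega)⟩
end
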